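/- arXiv:0708.1165 — 2 statements merged into one kernel-verified Lean document; each statement's English description precedes it below -/
import Mathlib

section
/- Let φ_1, …, φ_N be an orthonormal system in L^2(ℝ, ℂ) with each φ_n in H^1(ℝ). Define ρ(x) = Σ_{n=1}^N |φ_n(x)|^2. Then ∫_ℝ ρ(x)^3 dx ≤ Σ_{n=1}^N ∫_ℝ |φ_n'(x)|^2 dx. -/
/-!
Fix `x` and put `g = Σ_j conj (φ_j x) • φ_j`. Orthonormality gives `g x = ‖g‖₂² = ρ x`, so the
one-dimensional Agmon inequality `|g x|⁴ ≤ ‖g‖₂² ‖g'‖₂²` yields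
`ρ(x)³ ≤ ‖g'‖₂² = ∫ |Σ_j conj (φ_j x) φ_j' s|² ds`. Integrating in `x`, orthonormality collapses
the double sum on the right to `Σ_j ‖φ_j'‖₂²`.

Agmon's inequality itself comes from `|f x|² = ∫_{-∞}^x (|f|²)' = -∫_x^∞ (|f|²)'`, which gives
`|f x|² ≤ ∫ |f| |f'|`, followed by Cauchy–Schwarz.
-/

open MeasureTheory Set
open scoped ComplexConjugate

section FTC

variable {E : Type*} [NormedAddCommGroup E] [NormedSpace ℝ E] [CompleteSpace E]

lemma two_mul_norm_le_integral_norm_deriv {h h' : ℝ → E} (hderiv : ∀ s, HasDerivAt h (h' s) s)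
    (hint : Integrable h) (hint' : Integrable h') (x : ℝ) :
    2 * ‖h x‖ ≤ ∫ s, ‖h' s‖ := by
  have hleft : ∫ s in Iic x, h' s = h x := by
    rw [integral_Iic_of_hasDerivAt_of_tendsto' (fun s _ => hderiv s) hint'.integrableOn
      (tendsto_zero_of_hasDerivAt_of_integrableOn_Iic (a := x) (fun s _ => hderiv s)
        hint'.integrableOn hint.integrableOn), sub_zero]
  have hright : ∫ s in Ioi x, h' s = -h x := by
    rw [integral_Ioi_of_hasDerivAt_of_tendsto' (fun s _ => hderiv s) hint'.integrableOn
      (tendsto_zero_of_hasDerivAt_of_integrableOn_Ioi (a := x) (fun s _ => hderiv s)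
        hint'.integrableOn hint.integrableOn), zero_sub]
  calc 2 * ‖h x‖ = ‖∫ s in Iic x, h' s‖ + ‖∫ s in Ioi x, h' s‖ := by
        rw [hleft, hright, norm_neg]; ring
    _ ≤ (∫ s in Iic x, ‖h' s‖) + ∫ s in Ioi x, ‖h' s‖ :=
        add_le_add (norm_integral_le_integral_norm _) (norm_integral_le_integral_norm _)
    _ = ∫ s, ‖h' s‖ := by
        rw [← compl_Iic, integral_add_compl measurableSet_Iic hint'.norm]

end FTC

section CauchySchwarz

variable {α F G : Type*} [MeasurableSpace α] {μ : Measure α} [NormedAddCommGroup F]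
  [NormedAddCommGroup G]

lemma sq_integral_norm_mul_norm_le {f : α → F} {g : α → G} (hf : MemLp f 2 μ)
    (hg : MemLp g 2 μ) :
    (∫ s, ‖f s‖ * ‖g s‖ ∂μ) ^ 2 ≤ (∫ s, ‖f s‖ ^ 2 ∂μ) * ∫ s, ‖g s‖ ^ 2 ∂μ := by
  have holder := integral_mul_le_Lp_mul_Lq_of_nonneg Real.HolderConjugate.two_two
    (ae_of_all _ fun s => norm_nonneg (f s)) (ae_of_all _ fun s => norm_nonneg (g s))
    (by simpa using hf.norm) (by simpa using hg.norm)
  simp only [Real.rpow_two, ← Real.sqrt_eq_rpow] at holder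
  calc (∫ s, ‖f s‖ * ‖g s‖ ∂μ) ^ 2
      ≤ (√(∫ s, ‖f s‖ ^ 2 ∂μ) * √(∫ s, ‖g s‖ ^ 2 ∂μ)) ^ 2 :=
        pow_le_pow_left₀ (integral_nonneg fun s => by positivity) holder 2
    _ = (∫ s, ‖f s‖ ^ 2 ∂μ) * ∫ s, ‖g s‖ ^ 2 ∂μ := by
        rw [mul_pow, Real.sq_sqrt (integral_nonneg fun s => by positivity),
          Real.sq_sqrt (integral_nonneg fun s => by positivity)]

end CauchySchwarz

section Agmon

variable {F : Type*} [NormedAddCommGroup F] [InnerProductSpace ℝ F]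

lemma sq_norm_le_integral_norm_mul_norm_deriv {f : ℝ → F} (hf : Differentiable ℝ f)
    (hf2 : MemLp f 2) (hf'2 : MemLp (deriv f) 2) (x : ℝ) :
    ‖f x‖ ^ 2 ≤ ∫ s, ‖f s‖ * ‖deriv f s‖ := by
  have hprod : Integrable (fun s => 2 * (‖f s‖ * ‖deriv f s‖)) :=
    (hf2.norm.integrable_mul hf'2.norm).const_mul 2
  have hinner_le (s : ℝ) : ‖2 * inner ℝ (f s) (deriv f s)‖ ≤ 2 * (‖f s‖ * ‖deriv f s‖) := by
    rw [norm_mul, Real.norm_two]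
    gcongr
    exact abs_real_inner_le_norm _ _
  have hinner : Integrable (fun s => 2 * inner ℝ (f s) (deriv f s)) :=
    hprod.mono' ((hf2.1.inner hf'2.1).const_mul 2) (ae_of_all _ hinner_le)
  have hftc := two_mul_norm_le_integral_norm_deriv (fun s => (hf s).hasDerivAt.norm_sq)
    ((memLp_two_iff_integrable_sq_norm hf2.1).1 hf2) hinner x
  rw [Real.norm_of_nonneg (by positivity)] at hftc
  have hbound := integral_mono hinner.norm hprod hinner_le
  rw [integral_const_mul] at hbound
  linarith

lemma sq_sq_norm_le_integral_sq_norm_mul_integral_sq_norm_deriv {f : ℝ → F}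
    (hf : Differentiable ℝ f) (hf2 : MemLp f 2) (hf'2 : MemLp (deriv f) 2) (x : ℝ) :
    (‖f x‖ ^ 2) ^ 2 ≤ (∫ s, ‖f s‖ ^ 2) * ∫ s, ‖deriv f s‖ ^ 2 :=
  calc (‖f x‖ ^ 2) ^ 2 ≤ (∫ s, ‖f s‖ * ‖deriv f s‖) ^ 2 := by
        gcongr
        exact sq_norm_le_integral_norm_mul_norm_deriv hf hf2 hf'2 x
    _ ≤ (∫ s, ‖f s‖ ^ 2) * ∫ s, ‖deriv f s‖ ^ 2 := sq_integral_norm_mul_norm_le hf2 hf'2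

end Agmon

section LinearCombination

variable {α ι : Type*} [MeasurableSpace α] {μ : Measure α} [Fintype ι]

lemma integrable_mul_conj {f g : α → ℂ} (hf : MemLp f 2 μ) (hg : MemLp g 2 μ) :
    Integrable (fun s => f s * conj (g s)) μ :=
  hf.integrable_mul hg.star

lemma integral_mul_conj_self (g : α → ℂ) :
    ∫ s, g s * conj (g s) ∂μ = ((∫ s, ‖g s‖ ^ 2 ∂μ : ℝ) : ℂ) := by
  simp_rw [Complex.mul_conj', ← Complex.ofReal_pow, integral_complex_ofReal]

lemma integral_sum_mul_conj_sum (c : ι → ℂ) {ψ : ι → α → ℂ} (hψ : ∀ j, MemLp (ψ j) 2 μ) :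
    ∫ s, (∑ j, c j * ψ j s) * conj (∑ k, c k * ψ k s) ∂μ
      = ∑ j, ∑ k, c j * conj (c k) * ∫ s, ψ j s * conj (ψ k s) ∂μ := by
  have hterm (j k : ι) : Integrable (fun s => c j * conj (c k) * (ψ j s * conj (ψ k s))) μ :=
    (integrable_mul_conj (hψ j) (hψ k)).const_mul _
  simp only [map_sum, map_mul, Finset.sum_mul_sum, mul_mul_mul_comm (c _) (ψ _ _)]
  rw [integral_finsetSum _ fun j _ => integrable_finsetSum _ fun k _ => hterm j k]
  simp only [integral_finsetSum _ fun k _ => hterm _ k, integral_const_mul]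

variable [DecidableEq ι] {φ : ι → α → ℂ}

lemma integral_norm_sq_sum_of_orthonormal (hφ : ∀ j, MemLp (φ j) 2 μ)
    (hortho : ∀ j k, ∫ s, φ j s * conj (φ k s) ∂μ = if j = k then 1 else 0) (c : ι → ℂ) :
    ∫ s, ‖∑ j, c j * φ j s‖ ^ 2 ∂μ = ∑ j, ‖c j‖ ^ 2 := by
  apply Complex.ofReal_injective
  rw [← integral_mul_conj_self, integral_sum_mul_conj_sum c hφ]
  simp [hortho, Complex.mul_conj']

end LinearCombination

section Kernel

variable {α β ι : Type*} [MeasurableSpace β] {ν : Measure β} [Fintype ι] {φ : ι → α → ℂ}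
  {ψ : ι → β → ℂ}

lemma ofReal_integral_norm_sq_sum_conj_mul (hψ : ∀ j, MemLp (ψ j) 2 ν) (x : α) :
    ((∫ s, ‖∑ j, conj (φ j x) * ψ j s‖ ^ 2 ∂ν : ℝ) : ℂ)
      = ∑ j, ∑ k, (∫ s, ψ j s * conj (ψ k s) ∂ν) * (φ k x * conj (φ j x)) := by
  rw [← integral_mul_conj_self, integral_sum_mul_conj_sum _ hψ]
  simp only [Complex.conj_conj]
  exact Finset.sum_congr rfl fun j _ => Finset.sum_congr rfl fun k _ => by ring

variable [MeasurableSpace α] {μ : Measure α}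

lemma integrable_integral_norm_sq_sum_conj_mul (hφ : ∀ j, MemLp (φ j) 2 μ)
    (hψ : ∀ j, MemLp (ψ j) 2 ν) :
    Integrable (fun x => ∫ s, ‖∑ j, conj (φ j x) * ψ j s‖ ^ 2 ∂ν) μ := by
  have hsum : Integrable (fun x => ∑ j, ∑ k,
      (∫ s, ψ j s * conj (ψ k s) ∂ν) * (φ k x * conj (φ j x))) μ :=
    integrable_finsetSum _ fun j _ => integrable_finsetSum _ fun k _ =>
      (integrable_mul_conj (hφ k) (hφ j)).const_mul _
  refine hsum.re.congr (ae_of_all _ fun x => ?_)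
  simp only [← ofReal_integral_norm_sq_sum_conj_mul hψ, RCLike.re_to_complex, Complex.ofReal_re]

variable [DecidableEq ι]

lemma integral_integral_norm_sq_sum_conj_mul (hφ : ∀ j, MemLp (φ j) 2 μ)
    (hortho : ∀ j k, ∫ x, φ j x * conj (φ k x) ∂μ = if j = k then 1 else 0)
    (hψ : ∀ j, MemLp (ψ j) 2 ν) :
    ∫ x, ∫ s, ‖∑ j, conj (φ j x) * ψ j s‖ ^ 2 ∂ν ∂μ = ∑ j, ∫ s, ‖ψ j s‖ ^ 2 ∂ν := by
  apply Complex.ofReal_injective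
  have hterm (j k : ι) : Integrable (fun x =>
      (∫ s, ψ j s * conj (ψ k s) ∂ν) * (φ k x * conj (φ j x))) μ :=
    (integrable_mul_conj (hφ k) (hφ j)).const_mul _
  rw [← integral_complex_ofReal]
  simp only [ofReal_integral_norm_sq_sum_conj_mul hψ]
  rw [integral_finsetSum _ fun j _ => integrable_finsetSum _ fun k _ => hterm j k]
  simp [integral_finsetSum _ fun k _ => hterm _ k, integral_const_mul, hortho,
    integral_mul_conj_self]

end Kernel

section Density

variable {ι : Type*} [Fintype ι] [DecidableEq ι] {φ : ι → ℝ → ℂ}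

lemma sum_norm_sq_pow_three_le_integral (hdiff : ∀ j, Differentiable ℝ (φ j))
    (hL2 : ∀ j, MemLp (φ j) 2) (hL2' : ∀ j, MemLp (deriv (φ j)) 2)
    (hortho : ∀ j k, ∫ s, φ j s * conj (φ k s) = if j = k then 1 else 0) (x : ℝ) :
    (∑ j, ‖φ j x‖ ^ 2) ^ 3 ≤ ∫ s, ‖∑ j, conj (φ j x) * deriv (φ j) s‖ ^ 2 := by
  set ρ := ∑ j, ‖φ j x‖ ^ 2
  set g : ℝ → ℂ := fun s => ∑ j, conj (φ j x) * φ j s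
  have hg (s : ℝ) : HasDerivAt g (∑ j, conj (φ j x) * deriv (φ j) s) s :=
    HasDerivAt.fun_sum fun j _ => ((hdiff j s).hasDerivAt.const_mul _)
  have hderiv : deriv g = fun s => ∑ j, conj (φ j x) * deriv (φ j) s :=
    funext fun s => (hg s).deriv
  have hgx : g x = ρ := by
    simp only [g, ρ, Complex.conj_mul', Complex.ofReal_sum, Complex.ofReal_pow]
  have hg2 : ∫ s, ‖g s‖ ^ 2 = ρ := by
    simp only [g, integral_norm_sq_sum_of_orthonormal hL2 hortho, Complex.norm_conj, ρ]
  have agmon := sq_sq_norm_le_integral_sq_norm_mul_integral_sq_norm_deriv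
    (fun s => (hg s).differentiableAt)
    (memLp_finsetSum _ fun j _ => (hL2 j).const_mul _)
    (hderiv ▸ memLp_finsetSum _ fun j _ => (hL2' j).const_mul _) x
  have hρ : 0 ≤ ρ := by positivity
  rw [hgx, hg2, hderiv, Complex.norm_of_nonneg hρ] at agmon
  rcases hρ.eq_or_lt with hρ0 | hρpos
  · rw [← hρ0]
    simpa using integral_nonneg fun s => sq_nonneg _
  · refine le_of_mul_le_mul_left ?_ hρpos
    linear_combination agmon

end Density

/-- Generalized Sobolev (Lieb–Thirring kinetic energy) inequality for an
orthonormal system `φ₁, …, φ_N` in `L²(ℝ, ℂ)` of `H¹` functions: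
with `ρ(x) = Σ_n |φ_n(x)|²`, one has `∫ ρ³ ≤ Σ_n ∫ |φ_n'|²`. -/
theorem density_cube_integral_le (N : ℕ) (φ : Fin N → ℝ → ℂ)
    (hdiff : ∀ n, Differentiable ℝ (φ n))
    (hL2 : ∀ n, MemLp (φ n) 2 (volume : Measure ℝ))
    (hL2' : ∀ n, MemLp (deriv (φ n)) 2 (volume : Measure ℝ))
    (hortho : ∀ n m, ∫ x : ℝ, φ n x * (starRingEnd ℂ) (φ m x) =
      if n = m then 1 else 0) :
    ∫ x : ℝ, (∑ n, ‖φ n x‖ ^ 2) ^ 3 ≤ ∑ n, ∫ x : ℝ, ‖deriv (φ n) x‖ ^ 2 := by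
  calc ∫ x, (∑ n, ‖φ n x‖ ^ 2) ^ 3
      ≤ ∫ x, ∫ s, ‖∑ n, conj (φ n x) * deriv (φ n) s‖ ^ 2 :=
        integral_mono_of_nonneg (ae_of_all _ fun x => by positivity)
          (integrable_integral_norm_sq_sum_conj_mul hL2 hL2')
          (ae_of_all _ (sum_norm_sq_pow_three_le_integral hdiff hL2 hL2' hortho))
    _ = ∑ n, ∫ x, ‖deriv (φ n) x‖ ^ 2 := integral_integral_norm_sq_sum_conj_mul hL2 hortho hL2'
end

section
/- Let U(x,y) be the matrix kernel of the orthogonal projection onto the span of an orthonormal system of H^1 vector-functions φ_1, …, φ_N in L^2(ℝ, ℂ^M). Then for every x ∈ ℝ, Tr[U(x,x)^3] ≤ ∫_ℝ Tr[(∂_y U(x,y)) (∂_y U(y,x))] dy. -/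
/-!
Write `G` for the Gram matrix `(⟨φₙ(x), φₘ(x)⟩)ₙₘ` of the values at `x` and `K` for the Gram
matrix `(∫ ⟨φₙ', φₘ'⟩)ₙₘ` of the derivatives. Cycling the trace turns the claim into
`Re Tr G³ ≤ Re Tr (K G)`. For a unit vector `ξ`, the function `w = ∑ ξₙ φₙ` has `‖w‖₂ = 1` by
orthonormality, so the one-dimensional Sobolev inequality `‖w(x)‖⁴ ≤ ‖w‖₂² ‖w'‖₂²` (from
`2 ‖w(x)‖² ≤ ∫ |(‖w‖²)'|` and AM-GM) gives `⟨ξ, G ξ⟩² ≤ ⟨ξ, K ξ⟩`. Testing this on the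
eigenvectors of the positive semidefinite `G` yields `λ³ ≤ λ ⟨ξ, K ξ⟩` for each eigenvalue `λ`,
and summing gives the claim.
-/

open MeasureTheory Set Matrix WithLp
open scoped InnerProductSpace ComplexConjugate ComplexOrder

section Sobolev

theorem two_mul_le_integral_abs_of_hasDerivAt {f f' : ℝ → ℝ} (hf : ∀ y, HasDerivAt f (f' y) y)
    (hfi : Integrable f) (hf'i : Integrable f') (x : ℝ) : 2 * f x ≤ ∫ y, |f' y| := by
  have hleft : ∫ y in Iic x, f' y = f x := by
    simpa using integral_Iic_of_hasDerivAt_of_tendsto' (fun y _ => hf y) hf'i.integrableOn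
      (tendsto_zero_of_hasDerivAt_of_integrableOn_Iic (a := x) (fun y _ => hf y)
        hf'i.integrableOn hfi.integrableOn)
  have hright : ∫ y in Ioi x, f' y = -f x := by
    simpa using integral_Ioi_of_hasDerivAt_of_tendsto' (fun y _ => hf y) hf'i.integrableOn
      (tendsto_zero_of_hasDerivAt_of_integrableOn_Ioi (a := x) (fun y _ => hf y)
        hf'i.integrableOn hfi.integrableOn)
  have hIic : ∫ y in Iic x, f' y ≤ ∫ y in Iic x, |f' y| :=
    (le_abs_self _).trans abs_integral_le_integral_abs
  have hIoi : -∫ y in Ioi x, f' y ≤ ∫ y in Ioi x, |f' y| :=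
    (neg_le_abs _).trans abs_integral_le_integral_abs
  rw [← intervalIntegral.integral_Iic_add_Ioi hf'i.abs.integrableOn hf'i.abs.integrableOn]
  linarith

theorem sq_le_mul_of_forall_two_mul_le {a A B : ℝ} (ha : 0 ≤ a) (hA : 0 ≤ A) (hB : 0 ≤ B)
    (h : ∀ t > 0, 2 * a ≤ t * A + t⁻¹ * B) : a ^ 2 ≤ A * B := by
  rcases ha.eq_or_lt with rfl | ha
  · simpa using mul_nonneg hA hB
  rcases hA.eq_or_lt with rfl | hA
  · have := h ((B + 1) / a) (by positivity)
    rw [mul_zero, zero_add, inv_div, div_mul_eq_mul_div, le_div_iff₀ (by positivity)] at this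
    nlinarith
  · have := h (a / A) (by positivity)
    rw [div_mul_cancel₀ _ hA.ne', inv_div, div_mul_eq_mul_div] at this
    have : a * a ≤ A * B := by
      rw [← le_div_iff₀' ha]
      linarith
    nlinarith

variable {E : Type*} [NormedAddCommGroup E] [InnerProductSpace ℝ E]

theorem abs_two_mul_real_inner_le (u v : E) {t : ℝ} (ht : 0 < t) :
    |2 * ⟪u, v⟫_ℝ| ≤ t * ‖u‖ ^ 2 + t⁻¹ * ‖v‖ ^ 2 := by
  have hcs := abs_real_inner_le_norm u v
  have hamgm : 0 ≤ t⁻¹ * (t * ‖u‖ - ‖v‖) ^ 2 := by positivity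
  have : t⁻¹ * t = 1 := inv_mul_cancel₀ ht.ne'
  rw [abs_mul, abs_two]
  nlinarith

theorem sq_norm_sq_le_integral_mul_integral {w w' : ℝ → E} (hw : ∀ y, HasDerivAt w (w' y) y)
    (hw2 : MemLp w 2) (hw'2 : MemLp w' 2) (x : ℝ) :
    (‖w x‖ ^ 2) ^ 2 ≤ (∫ y, ‖w y‖ ^ 2) * ∫ y, ‖w' y‖ ^ 2 := by
  have hρ : Integrable fun y => ‖w y‖ ^ 2 := hw2.integrable_norm_pow two_ne_zero
  have hσ : Integrable fun y => ‖w' y‖ ^ 2 := hw'2.integrable_norm_pow two_ne_zero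
  have hρ' : Integrable fun y => 2 * ⟪w y, w' y⟫_ℝ := by
    refine (hρ.add hσ).mono' ((hw2.1.inner hw'2.1).const_mul 2) (ae_of_all _ fun y => ?_)
    simpa using abs_two_mul_real_inner_le (w y) (w' y) one_pos
  refine sq_le_mul_of_forall_two_mul_le (by positivity) (integral_nonneg fun y => by positivity)
    (integral_nonneg fun y => by positivity) fun t ht => ?_
  calc 2 * ‖w x‖ ^ 2 ≤ ∫ y, |2 * ⟪w y, w' y⟫_ℝ| :=
        two_mul_le_integral_abs_of_hasDerivAt (fun y => (hw y).norm_sq) hρ hρ' x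
    _ ≤ ∫ y, (t * ‖w y‖ ^ 2 + t⁻¹ * ‖w' y‖ ^ 2) :=
        integral_mono hρ'.abs ((hρ.const_mul t).add (hσ.const_mul t⁻¹))
          fun y => abs_two_mul_real_inner_le (w y) (w' y) ht
    _ = t * (∫ y, ‖w y‖ ^ 2) + t⁻¹ * ∫ y, ‖w' y‖ ^ 2 := by
        rw [integral_add (hρ.const_mul t) (hσ.const_mul t⁻¹), integral_const_mul,
          integral_const_mul]

end Sobolev

section GramIntegral

variable {α 𝕜 ι : Type*} [MeasurableSpace α] {μ : Measure α} [RCLike 𝕜] [Fintype ι]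

theorem MeasureTheory.MemLp.integrable_inner {E : Type*} [NormedAddCommGroup E]
    [InnerProductSpace 𝕜 E] {f g : α → E} (hf : MemLp f 2 μ) (hg : MemLp g 2 μ) :
    Integrable (fun y => ⟪f y, g y⟫_𝕜) μ :=
  (L2.integrable_inner (𝕜 := 𝕜) hf.toLp hg.toLp).congr <| by
    filter_upwards [hf.coeFn_toLp, hg.coeFn_toLp] with y hfy hgy
    rw [hfy, hgy]

theorem Matrix.integrable_trace_mul {A : α → Matrix ι ι 𝕜}
    (hA : ∀ i j, Integrable (fun y => A y i j) μ) (G : Matrix ι ι 𝕜) :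
    Integrable (fun y => trace (A y * G)) μ := by
  simp only [trace, diag, mul_apply]
  exact integrable_finsetSum _ fun i _ => integrable_finsetSum _ fun j _ => (hA i j).mul_const _

theorem Matrix.integral_trace_mul {A : α → Matrix ι ι 𝕜}
    (hA : ∀ i j, Integrable (fun y => A y i j) μ) (G : Matrix ι ι 𝕜) :
    ∫ y, trace (A y * G) ∂μ = trace ((of fun i j => ∫ y, A y i j ∂μ) * G) := by
  simp only [trace, diag, mul_apply, of_apply]
  rw [integral_finsetSum _ fun i _ => integrable_finsetSum _ fun j _ => (hA i j).mul_const _]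
  refine Finset.sum_congr rfl fun i _ => ?_
  rw [integral_finsetSum _ fun j _ => (hA i j).mul_const _]
  simp only [integral_mul_const]

theorem Matrix.integral_star_dotProduct_mulVec {A : α → Matrix ι ι 𝕜}
    (hA : ∀ i j, Integrable (fun y => A y i j) μ) (ξ : ι → 𝕜) :
    ∫ y, star ξ ⬝ᵥ A y *ᵥ ξ ∂μ = star ξ ⬝ᵥ (of fun i j => ∫ y, A y i j ∂μ) *ᵥ ξ := by
  simp only [dotProduct, mulVec, of_apply]
  rw [integral_finsetSum _ fun i _ =>
    (integrable_finsetSum _ fun j _ => (hA i j).mul_const _).const_mul _]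
  refine Finset.sum_congr rfl fun i _ => ?_
  rw [integral_const_mul, integral_finsetSum _ fun j _ => (hA i j).mul_const _]
  simp only [integral_mul_const]

theorem Matrix.re_star_dotProduct_integral_gram_mulVec {E : Type*} [NormedAddCommGroup E]
    [InnerProductSpace 𝕜 E] {v : ι → α → E} (hv : ∀ i, MemLp (v i) 2 μ) (ξ : ι → 𝕜) :
    RCLike.re (star ξ ⬝ᵥ (of fun i j => ∫ y, ⟪v i y, v j y⟫_𝕜 ∂μ) *ᵥ ξ) =
      ∫ y, ‖∑ i, ξ i • v i y‖ ^ 2 ∂μ := by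
  have hA : ∀ i j, Integrable (fun y => gram 𝕜 (v · y) i j) μ := fun i j =>
    (hv i).integrable_inner (hv j)
  have hw : MemLp (fun y => ∑ i, ξ i • v i y) 2 μ :=
    memLp_finsetSum _ fun i _ => (hv i).const_smul (ξ i)
  have h := integral_star_dotProduct_mulVec hA ξ
  simp only [star_dotProduct_gram_mulVec, gram_apply] at h
  rw [← h, ← integral_re (hw.integrable_inner hw)]
  simp only [inner_self_eq_norm_sq]

end GramIntegral

section TraceInequality

variable {𝕜 n : Type*} [RCLike 𝕜] [Fintype n] [DecidableEq n]

theorem Matrix.trace_eq_sum_star_dotProduct_mulVec (A : Matrix n n 𝕜)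
    (b : OrthonormalBasis n 𝕜 (EuclideanSpace 𝕜 n)) :
    A.trace = ∑ i, star ⇑(b i) ⬝ᵥ A *ᵥ ⇑(b i) := by
  have htrace : LinearMap.trace 𝕜 _ (toLpLin 2 2 A) = A.trace := by
    rw [toLpLin_eq_toLin, LinearMap.trace_eq_matrix_trace 𝕜 (PiLp.basisFun 2 𝕜 n),
      LinearMap.toMatrix_toLin]
  rw [← htrace, LinearMap.trace_eq_sum_inner _ b]
  simp [EuclideanSpace.inner_eq_star_dotProduct, dotProduct_comm]

theorem Matrix.PosSemidef.re_trace_pow_three_le_re_trace_mul {G K : Matrix n n 𝕜}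
    (hG : G.PosSemidef)
    (hGK : ∀ ξ : n → 𝕜, star ξ ⬝ᵥ ξ = 1 →
      RCLike.re (star ξ ⬝ᵥ G *ᵥ ξ) ^ 2 ≤ RCLike.re (star ξ ⬝ᵥ K *ᵥ ξ)) :
    RCLike.re (G ^ 3).trace ≤ RCLike.re (K * G).trace := by
  set b := hG.isHermitian.eigenvectorBasis
  set μ := hG.isHermitian.eigenvalues
  have hGb : ∀ i, G *ᵥ ⇑(b i) = μ i • ⇑(b i) := hG.isHermitian.mulVec_eigenvectorBasis
  have hunit : ∀ i, star ⇑(b i) ⬝ᵥ ⇑(b i) = 1 := fun i => by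
    rw [dotProduct_comm, ← EuclideanSpace.inner_eq_star_dotProduct, inner_self_eq_norm_sq_to_K,
      b.orthonormal.1 i]
    simp
  have hcube : ∀ i, star ⇑(b i) ⬝ᵥ (G ^ 3) *ᵥ ⇑(b i) = (μ i ^ 3 : ℝ) := fun i => by
    simp only [pow_three, ← mulVec_mulVec, hGb, mulVec_smul, smul_smul, dotProduct_smul, hunit,
      RCLike.real_smul_eq_coe_mul]
    push_cast
    ring
  have hmul : ∀ i, star ⇑(b i) ⬝ᵥ (K * G) *ᵥ ⇑(b i) = μ i * (star ⇑(b i) ⬝ᵥ K *ᵥ ⇑(b i)) :=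
    fun i => by
      rw [← mulVec_mulVec, hGb, mulVec_smul, dotProduct_smul, RCLike.real_smul_eq_coe_mul]
  rw [trace_eq_sum_star_dotProduct_mulVec _ b, trace_eq_sum_star_dotProduct_mulVec _ b, map_sum,
    map_sum]
  refine Finset.sum_le_sum fun i _ => ?_
  have hsq : μ i ^ 2 ≤ RCLike.re (star ⇑(b i) ⬝ᵥ K *ᵥ ⇑(b i)) := by
    have h := hGK _ (hunit i)
    rwa [← hG.isHermitian.eigenvalues_eq i] at h
  rw [hcube, hmul, RCLike.ofReal_re, RCLike.re_ofReal_mul]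
  nlinarith [hG.eigenvalues_nonneg i]

end TraceInequality

section Kernel

theorem Matrix.trace_mul_pow_succ_comm {m n α : Type*} [Fintype m] [Fintype n] [DecidableEq m]
    [DecidableEq n] [CommSemiring α] (A : Matrix m n α) (B : Matrix n m α) (k : ℕ) :
    trace ((A * B) ^ (k + 1)) = trace ((B * A) ^ (k + 1)) := by
  have h : ∀ k : ℕ, (A * B) ^ (k + 1) = A * ((B * A) ^ k * B) := by
    intro k
    induction k with
    | zero => simp
    | succ k ih => rw [pow_succ, ih, pow_succ]; simp only [Matrix.mul_assoc]
  rw [h, trace_mul_comm, Matrix.mul_assoc, ← pow_succ]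

variable {𝕜 ι κ : Type*} [RCLike 𝕜]

theorem Matrix.of_sum_mul_conj_eq_conjTranspose_mul [Fintype ι] (a b : ι → κ → 𝕜) :
    (of fun j k => ∑ n, a n j * conj (b n k)) =
      (of fun n k => conj (a n k))ᴴ * (of fun n k => conj (b n k)) := by
  ext j k
  simp [mul_apply]

theorem Matrix.of_deriv_sum_mul_conj_right [Fintype ι] (a : ι → κ → 𝕜) {f : ι → ℝ → κ → 𝕜}
    (hf : ∀ n k, Differentiable ℝ fun t => f n t k) (y : ℝ) :
    (of fun j k => deriv (fun t => ∑ n, a n j * conj (f n t k)) y) =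
      of fun j k => ∑ n, a n j * conj (deriv (fun t => f n t k) y) := by
  ext j k
  exact (HasDerivAt.fun_sum fun n _ => ((hf n k y).hasDerivAt.star).const_mul (a n j)).deriv

theorem Matrix.of_deriv_sum_mul_conj_left [Fintype ι] {f : ι → ℝ → κ → 𝕜} (b : ι → κ → 𝕜)
    (hf : ∀ n k, Differentiable ℝ fun t => f n t k) (y : ℝ) :
    (of fun j k => deriv (fun t => ∑ n, f n t j * conj (b n k)) y) =
      of fun j k => ∑ n, deriv (fun t => f n t j) y * conj (b n k) := by
  ext j k
  exact (HasDerivAt.fun_sum fun n _ => (hf n j y).hasDerivAt.mul_const _).deriv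

theorem Matrix.gram_toLp_eq_mul_conjTranspose [Fintype κ] (a : ι → κ → 𝕜) :
    gram 𝕜 (fun n => toLp 2 (a n)) =
      (of fun n k => conj (a n k)) * (of fun n k => conj (a n k))ᴴ := by
  ext n m
  simp [mul_apply, PiLp.inner_apply, mul_comm]

theorem Matrix.trace_of_sum_mul_conj_pow_three [Fintype ι] [Fintype κ] [DecidableEq ι]
    [DecidableEq κ] (a : ι → κ → 𝕜) :
    trace ((of fun j k => ∑ n, a n j * conj (a n k)) ^ 3) =
      trace (gram 𝕜 (fun n => toLp 2 (a n)) ^ 3) := by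
  rw [of_sum_mul_conj_eq_conjTranspose_mul, gram_toLp_eq_mul_conjTranspose,
    trace_mul_pow_succ_comm]

theorem Matrix.trace_of_sum_mul_conj_mul_of_sum_mul_conj [Fintype ι] [Fintype κ]
    (a b : ι → κ → 𝕜) :
    trace ((of fun j k => ∑ n, a n j * conj (b n k)) *
        (of fun j k => ∑ n, b n j * conj (a n k))) =
      trace (gram 𝕜 (fun n => toLp 2 (b n)) * gram 𝕜 (fun n => toLp 2 (a n))) := by
  simp only [of_sum_mul_conj_eq_conjTranspose_mul, gram_toLp_eq_mul_conjTranspose,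
    Matrix.mul_assoc]
  rw [trace_mul_comm]
  simp only [Matrix.mul_assoc]

end Kernel

section OrthonormalSystem

variable {ι κ : Type*} [Fintype κ]

theorem hasDerivAt_toLp {F : Type*} [NormedAddCommGroup F] [NormedSpace ℝ F] {f : ℝ → κ → F}
    (hf : ∀ k, Differentiable ℝ fun t => f t k) (y : ℝ) :
    HasDerivAt (fun t => toLp 2 (f t)) (toLp 2 fun k => deriv (fun t => f t k) y) y :=
  (PiLp.continuousLinearEquiv 2 ℝ _).symm.hasFDerivAt.comp_hasDerivAt y
    (hasDerivAt_pi.2 fun k => (hf k y).hasDerivAt)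

theorem integral_gram_toLp_eq_one {𝕜 : Type*} [RCLike 𝕜] [DecidableEq ι] {φ : ι → ℝ → κ → 𝕜}
    (hφ : ∀ n k, MemLp (fun y => φ n y k) 2)
    (hortho : ∀ n m, ∑ k, ∫ y, φ n y k * conj (φ m y k) = if n = m then 1 else 0) :
    (of fun n m => ∫ y, ⟪toLp 2 (φ n y), toLp 2 (φ m y)⟫_𝕜) = 1 := by
  ext n m
  simp only [of_apply, PiLp.inner_apply]
  rw [integral_finsetSum _ fun k _ => (hφ n k).integrable_inner (hφ m k)]
  simp only [RCLike.inner_apply, hortho m n, one_apply, eq_comm]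

theorem sq_re_star_dotProduct_gram_mulVec_le [Fintype ι] [DecidableEq ι]
    {v v' : ι → ℝ → EuclideanSpace ℂ κ}
    (hv : ∀ i y, HasDerivAt (v i) (v' i y) y) (hv2 : ∀ i, MemLp (v i) 2)
    (hv'2 : ∀ i, MemLp (v' i) 2) (horth : (of fun i j => ∫ y, ⟪v i y, v j y⟫_ℂ) = 1) (x : ℝ)
    {ξ : ι → ℂ} (hξ : star ξ ⬝ᵥ ξ = 1) :
    RCLike.re (star ξ ⬝ᵥ gram ℂ (v · x) *ᵥ ξ) ^ 2 ≤
      RCLike.re (star ξ ⬝ᵥ (of fun i j => ∫ y, ⟪v' i y, v' j y⟫_ℂ) *ᵥ ξ) := by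
  have hw : ∀ y, HasDerivAt (fun t => ∑ i, ξ i • v i t) (∑ i, ξ i • v' i y) y := fun y =>
    HasDerivAt.fun_sum fun i _ => (hv i y).const_smul (ξ i)
  have hw2 : MemLp (fun t => ∑ i, ξ i • v i t) 2 :=
    memLp_finsetSum _ fun i _ => (hv2 i).const_smul (ξ i)
  have hw'2 : MemLp (fun t => ∑ i, ξ i • v' i t) 2 :=
    memLp_finsetSum _ fun i _ => (hv'2 i).const_smul (ξ i)
  have hnorm : ∫ y, ‖∑ i, ξ i • v i y‖ ^ 2 = 1 := by
    rw [← re_star_dotProduct_integral_gram_mulVec hv2, horth, one_mulVec, hξ, RCLike.one_re]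
  rw [star_dotProduct_gram_mulVec, inner_self_eq_norm_sq,
    re_star_dotProduct_integral_gram_mulVec hv'2]
  simpa [hnorm] using sq_norm_sq_le_integral_mul_integral hw hw2 hw'2 x

end OrthonormalSystem

/-- Pointwise bound from the proof of the matrix Sobolev inequality: for the
projection kernel `U` of an orthonormal system of `H¹` vector-functions,
for every `x`, `Tr[U(x,x)³] ≤ ∫ Tr[(∂_y U(x,y))(∂_y U(y,x))] dy`. -/
theorem trace_cube_le_integral_deriv (N M : ℕ) (φ : Fin N → ℝ → Fin M → ℂ)
    (hdiff : ∀ n j, Differentiable ℝ (fun x => φ n x j))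
    (hL2 : ∀ n j, MemLp (fun x => φ n x j) 2 (volume : Measure ℝ))
    (hL2' : ∀ n j, MemLp (deriv (fun x => φ n x j)) 2 (volume : Measure ℝ))
    (hortho : ∀ n m, ∑ j, ∫ x : ℝ, φ n x j * (starRingEnd ℂ) (φ m x j) =
      if n = m then 1 else 0)
    (U : ℝ → ℝ → Matrix (Fin M) (Fin M) ℂ)
    (hU : ∀ x y j k, U x y j k = ∑ n, φ n x j * (starRingEnd ℂ) (φ n y k))
    (x : ℝ) :
    (Matrix.trace (U x x ^ 3)).re ≤
      ∫ y : ℝ, (Matrix.trace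
        ((Matrix.of fun j k => deriv (fun t => U x t j k) y) *
         (Matrix.of fun j k => deriv (fun t => U t x j k) y))).re := by
  set v : Fin N → ℝ → EuclideanSpace ℂ (Fin M) := fun n y => toLp 2 (φ n y)
  set v' : Fin N → ℝ → EuclideanSpace ℂ (Fin M) := fun n y =>
    toLp 2 fun j => deriv (fun t => φ n t j) y
  have hv : ∀ n y, HasDerivAt (v n) (v' n y) y := fun n => hasDerivAt_toLp (hdiff n)
  have hv2 : ∀ n, MemLp (v n) 2 := fun n => memLp_piLp_iff.2 (hL2 n)
  have hv'2 : ∀ n, MemLp (v' n) 2 := fun n => memLp_piLp_iff.2 (hL2' n)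
  have hLHS : (U x x ^ 3).trace = (gram ℂ (v · x) ^ 3).trace := by
    rw [show U x x = of fun j k => ∑ n, φ n x j * conj (φ n x k) from ext (hU x x)]
    exact trace_of_sum_mul_conj_pow_three _
  have hRHS : ∀ y, ((of fun j k => deriv (fun t => U x t j k) y) *
      (of fun j k => deriv (fun t => U t x j k) y)).trace =
        (gram ℂ (v' · y) * gram ℂ (v · x)).trace := fun y => by
    simp_rw [hU]
    rw [of_deriv_sum_mul_conj_right _ hdiff, of_deriv_sum_mul_conj_left _ hdiff]
    exact trace_of_sum_mul_conj_mul_of_sum_mul_conj _ _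
  have hK : ∀ n m, Integrable fun y => gram ℂ (v' · y) n m := fun n m =>
    (hv'2 n).integrable_inner (hv'2 m)
  simp_rw [hLHS, hRHS]
  have hre := integral_re (integrable_trace_mul hK (gram ℂ (v · x)))
  simp only [RCLike.re_to_complex] at hre
  rw [hre, integral_trace_mul hK]
  exact (posSemidef_gram ℂ _).re_trace_pow_three_le_re_trace_mul fun ξ hξ =>
    sq_re_star_dotProduct_gram_mulVec_le hv hv2 hv'2
      (integral_gram_toLp_eq_one hL2 hortho) x hξ
end
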